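/- Let n', n'' ≥ 0 be integers with n' + n'' ≥ 2, and suppose C ⊆ ℤ2^{2n'} × ℤ4^{n''} is an additive 1-perfect code with respect to the Hamming metric, i.e., with respect to the graph which is the box product of n' complete graphs on (ZMod 2) × (ZMod 2) (one on each consecutive pair of ℤ2-coordinates) and n'' complete graphs on ZMod 4 (one on each ℤ4-coordinate). Then n'' = 0. -/

import Mathlib

open SimpleGraph

/-- The box (Cartesian) product of an indexed family of simple graphs. -/
def boxPi {ι : Type*} {V : ι → Type*} (G : ∀ i, SimpleGraph (V i)) :
    SimpleGraph (∀ i, V i) where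
  Adj x y := ∃ i, (G i).Adj (x i) (y i) ∧ ∀ j, j ≠ i → x j = y j
  symm := by
    constructor
    rintro x y ⟨i, h, he⟩
    exact ⟨i, h.symm, fun j hj => (he j hj).symm⟩
  loopless := by
    constructor
    rintro x ⟨i, h, -⟩
    exact (G i).loopless.irrefl _ h

/-- The Shrikhande graph on `(ZMod 4) × (ZMod 4)`. -/
def Shri : SimpleGraph (ZMod 4 × ZMod 4) where
  Adj a b := a - b ∈
    ({(0, 1), (1, 0), (1, 1), (0, 3), (3, 0), (3, 3)} : Finset (ZMod 4 × ZMod 4))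
  symm := by
    have h : ∀ a b : ZMod 4 × ZMod 4,
        a - b ∈ ({(0, 1), (1, 0), (1, 1), (0, 3), (3, 0), (3, 3)} :
          Finset (ZMod 4 × ZMod 4)) →
        b - a ∈ ({(0, 1), (1, 0), (1, 1), (0, 3), (3, 0), (3, 3)} :
          Finset (ZMod 4 × ZMod 4)) := by decide
    exact ⟨fun a b hab => h a b hab⟩
  loopless := by
    constructor
    intro a h
    rw [sub_self] at h
    revert h
    decide

/-- `C` is a 1-perfect code in `G`: every vertex is at graph distance at most 1
(i.e., equal or adjacent) from exactly one element of `C`. -/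
def IsPerfectCode {V : Type*} (G : SimpleGraph V) (C : Set V) : Prop :=
  ∀ v : V, ∃! c : V, c ∈ C ∧ (v = c ∨ G.Adj v c)

/-- The vertex set `ℤ₂^{2n'} × ℤ₄^{n''}`, the consecutive pairs of
`ZMod 2`-coordinates being grouped together. -/
abbrev HamVtx (n' n'' : ℕ) : Type :=
  (Fin n' → ZMod 2 × ZMod 2) × (Fin n'' → ZMod 4)

/-- The Hamming graph on `ℤ₂^{2n'} × ℤ₄^{n''}`: the box product of `n'` complete
graphs on `(ZMod 2) × (ZMod 2)` (one on each consecutive pair of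
`ZMod 2`-coordinates) and `n''` complete graphs on `ZMod 4`. -/
def HamGraphZ (n' n'' : ℕ) : SimpleGraph (HamVtx n' n'') :=
  (boxPi fun _ : Fin n' => (⊤ : SimpleGraph (ZMod 2 × ZMod 2))) □
    (boxPi fun _ : Fin n'' => (⊤ : SimpleGraph (ZMod 4)))

/-!
A 1-perfect code has minimum distance 3, so a nonzero codeword of an additive perfect code is never
supported on two coordinates. Suppose there is a `ℤ₄`-coordinate `i₀`; as `n' + n'' ≥ 2` there is a
second coordinate `i₁` carrying a nonzero `b` with `b + b = 0` (`2` in `ℤ₄` or `(1, 0)` in `ℤ₂²`).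
Let `c` be the codeword covering `v = Pi.single i₀ 1 + Pi.single i₁ b`, and `m` the coordinate
outside which `c` and `v` agree. Then `c + c` is supported on `{i₀, m}`, so `c + c = 0`; hence
`c i₀ ≠ 1`, so `m = i₀` and `c` is supported on `{i₀, i₁}`, so `c = 0`, which does not cover `v`.

To run this argument uniformly, the two kinds of coordinates are merged into one index type
`Fin n' ⊕ Fin n''`, along an additive isomorphism that is also a graph isomorphism.
-/

section Hamming

variable {ι : Type*} {β : ι → Type*}

abbrev hammingGraph (β : ι → Type*) : SimpleGraph (∀ i, β i) :=
  boxPi fun i => (⊤ : SimpleGraph (β i))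

theorem eq_or_hammingGraph_adj_iff [Nonempty ι] {x y : ∀ i, β i} :
    x = y ∨ (hammingGraph β).Adj x y ↔ ∃ i, ∀ j, j ≠ i → x j = y j := by
  constructor
  · rintro (rfl | ⟨i, -, h⟩)
    · exact ⟨Classical.arbitrary ι, fun _ _ => rfl⟩
    · exact ⟨i, h⟩
  · rintro ⟨i, h⟩
    by_cases hi : x i = y i
    · left
      funext j
      by_cases hj : j = i
      · exact hj ▸ hi
      · exact h j hj
    · exact Or.inr ⟨i, hi, h⟩

theorem IsPerfectCode.eq_of_near {V : Type*} {G : SimpleGraph V} {C : Set V}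
    (hC : IsPerfectCode G C) {c c' u : V} (hc : c ∈ C) (hc' : c' ∈ C)
    (hu : u = c ∨ G.Adj u c) (hu' : u = c' ∨ G.Adj u c') : c = c' :=
  (hC u).unique ⟨hc, hu⟩ ⟨hc', hu'⟩

theorem IsPerfectCode.image {V W : Type*} {G : SimpleGraph V} {H : SimpleGraph W}
    {C : Set V} (hC : IsPerfectCode G C) (f : G ≃g H) : IsPerfectCode H (f '' C) := by
  have near_iff : ∀ {v w : V}, (f v = f w ∨ H.Adj (f v) (f w)) ↔ (v = w ∨ G.Adj v w) := by
    intro v w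
    rw [f.injective.eq_iff, f.map_adj_iff]
  intro w
  obtain ⟨c, ⟨hc, hnear⟩, huniq⟩ := hC (f.symm w)
  refine ⟨f c, ⟨⟨c, hc, rfl⟩, ?_⟩, ?_⟩
  · simpa using (near_iff (v := f.symm w)).mpr hnear
  · rintro _ ⟨⟨c', hc', rfl⟩, hnear'⟩
    rw [← f.apply_symm_apply w, near_iff] at hnear'
    rw [huniq c' ⟨hc', hnear'⟩]

theorem IsPerfectCode.eq_zero_of_eq_zero_off_pair [∀ i, Zero (β i)] {C : Set (∀ i, β i)}
    (hC : IsPerfectCode (hammingGraph β) C) (h₀ : 0 ∈ C) {c : ∀ i, β i} (hc : c ∈ C)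
    {i i' : ι} (h : ∀ j, j ≠ i → j ≠ i' → c j = 0) : c = 0 := by
  classical
  have : Nonempty ι := ⟨i⟩
  refine hC.eq_of_near (u := Function.update c i 0) hc h₀ ?_ ?_
  · exact eq_or_hammingGraph_adj_iff.mpr ⟨i, fun j hj => Function.update_of_ne hj _ _⟩
  · refine eq_or_hammingGraph_adj_iff.mpr ⟨i', fun j hj => ?_⟩
    by_cases hji : j = i
    · subst hji
      simp
    · simp [Function.update_of_ne hji, h j hji hj]

theorem AddSubmonoid.not_isPerfectCode_hammingGraph [∀ i, AddMonoid (β i)]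
    (C : AddSubmonoid (∀ i, β i)) {i₀ i₁ : ι} (hi : i₁ ≠ i₀) {a : β i₀} (ha : a + a ≠ 0)
    {b : β i₁} (hb : b ≠ 0) (hb₂ : b + b = 0) : ¬ IsPerfectCode (hammingGraph β) C := by
  classical
  intro hC
  have : Nonempty ι := ⟨i₀⟩
  set v : ∀ i, β i := Pi.single i₀ a + Pi.single i₁ b
  have hv₀ : v i₀ = a := by simp [v, hi]
  have hv₁ : v i₁ = b := by simp [v, hi]
  have hv : ∀ j, j ≠ i₀ → j ≠ i₁ → v j = 0 := fun j h₀ h₁ => by simp [v, h₀, h₁]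
  obtain ⟨c, ⟨hc, hvc⟩, -⟩ := hC v
  obtain ⟨m, hm⟩ := eq_or_hammingGraph_adj_iff.mp hvc
  have hcc : c + c = 0 := by
    refine hC.eq_zero_of_eq_zero_off_pair C.zero_mem (C.add_mem hc hc) (i := i₀) (i' := m)
      fun j h₀ hjm => ?_
    rw [Pi.add_apply, ← hm j hjm]
    by_cases h₁ : j = i₁
    · rw [h₁, hv₁, hb₂]
    · rw [hv j h₀ h₁, add_zero]
  have hm₀ : m = i₀ := by
    by_contra hm₀
    apply ha
    rw [← hv₀, hm i₀ (Ne.symm hm₀)]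
    exact congrFun hcc i₀
  subst hm₀
  have hc₀ : c = 0 := hC.eq_zero_of_eq_zero_off_pair C.zero_mem hc fun j h₀ h₁ => by
    rw [← hm j h₀, hv j h₀ h₁]
  exact hb (by rw [← hv₁, hm i₁ hi, hc₀]; rfl)

end Hamming

section MixedAlphabet

universe u

variable {ι κ : Type*} {V : ι → Type u} {W : κ → Type u}

instance [∀ i, AddMonoid (V i)] [∀ j, AddMonoid (W j)] : ∀ s, AddMonoid (Sum.elim V W s)
  | .inl i => inferInstanceAs (AddMonoid (V i))
  | .inr j => inferInstanceAs (AddMonoid (W j))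

def boxProdHammingGraphIso :
    (hammingGraph V).boxProd (hammingGraph W) ≃g hammingGraph (Sum.elim V W) where
  toEquiv := Equiv.prodPiEquivSumPi V W
  map_rel_iff' := by
    rintro ⟨x₁, x₂⟩ ⟨y₁, y₂⟩
    change (hammingGraph (Sum.elim V W)).Adj (Sum.rec x₁ x₂) (Sum.rec y₁ y₂) ↔ _
    simp only [boxPi, top_adj, ne_eq, Sum.forall, Sum.elim_inl, Sum.elim_inr, Sum.exists,
      Sum.inl.injEq, reduceCtorEq, not_false_eq_true, forall_const, Sum.inr.injEq, boxProd_adj,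
      funext_iff]
    constructor
    · rintro (⟨i, hi, h₁, h₂⟩ | ⟨j, hj, h₁, h₂⟩)
      · exact .inl ⟨⟨i, hi, h₁⟩, h₂⟩
      · exact .inr ⟨⟨j, hj, h₂⟩, h₁⟩
    · rintro (⟨⟨i, hi, h₁⟩, h₂⟩ | ⟨⟨j, hj, h₂⟩, h₁⟩)
      · exact .inl ⟨i, hi, h₁, h₂⟩
      · exact .inr ⟨j, hj, h₁, h₂⟩

def prodPiAddEquivSumPi [∀ i, AddMonoid (V i)] [∀ j, AddMonoid (W j)] :
    ((∀ i, V i) × ∀ j, W j) ≃+ ∀ s, Sum.elim V W s where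
  toEquiv := Equiv.prodPiEquivSumPi V W
  map_add' _ _ := by ext (i | j) <;> rfl

end MixedAlphabet

theorem additive_hamming_perfect_code_no_z4_part (n' n'' : ℕ) (h : 2 ≤ n' + n'')
    (C : AddSubgroup (HamVtx n' n''))
    (hC : IsPerfectCode (HamGraphZ n' n'') (C : Set (HamVtx n' n''))) :
    n'' = 0 := by
  by_contra hn''
  obtain ⟨i₀⟩ : Nonempty (Fin n'') := Fin.pos_iff_nonempty.mp (Nat.pos_of_ne_zero hn'')
  set V := Sum.elim (fun _ : Fin n' => ZMod 2 × ZMod 2) (fun _ : Fin n'' => ZMod 4)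
  obtain ⟨i₁, b, hi, hb, hb₂⟩ :
      ∃ (i₁ : Fin n' ⊕ Fin n'') (b : V i₁), i₁ ≠ .inr i₀ ∧ b ≠ 0 ∧ b + b = 0 := by
    rcases n' with _ | n'
    · have : Nontrivial (Fin n'') := Fin.nontrivial_iff_two_le.mpr (by omega)
      obtain ⟨j, hj⟩ := exists_ne i₀
      exact ⟨.inr j, (2 : ZMod 4), by simpa using hj,
        (by decide : (2 : ZMod 4) ≠ 0), (by decide : (2 : ZMod 4) + 2 = 0)⟩
    · exact ⟨.inl 0, ((1, 0) : ZMod 2 × ZMod 2), Sum.inl_ne_inr,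
        (by decide : ((1, 0) : ZMod 2 × ZMod 2) ≠ 0),
        (by decide : ((1, 0) : ZMod 2 × ZMod 2) + (1, 0) = 0)⟩
  refine (C.toAddSubmonoid.map prodPiAddEquivSumPi).not_isPerfectCode_hammingGraph hi
    (a := (1 : ZMod 4)) (by decide : (1 : ZMod 4) + 1 ≠ 0) hb hb₂ ?_
  rw [AddSubmonoid.coe_map]
  exact hC.image boxProdHammingGraphIso
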